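/- arXiv:2604.09460 — 2 statements merged into one kernel-verified Lean document; each statement's English description precedes it below -/
import Mathlib

section
/- A path x[0] ∈ X belongs to PCEP if and only if there exists a family of paths {x[i]}_{i∈N} ⊆ X such that for all k ∈ {0}∪N, all τ ≥ 1, all nonempty coalitions C ⊆ N, and all ζ^C_τ ∈ Z^C, there exists j ∈ C with U_j(x[k]) ≥ U_j(x[k]; ζ^C_τ; x[j]). -/
open Set

section Setup

variable {N : Type*} [Fintype N] [DecidableEq N] {Z : N → Type*}

/-- A stage-game action profile. -/
abbrev Profile (Z : N → Type*) := ∀ i, Z i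

/-- An infinite path of action profiles. -/
abbrev RPath (Z : N → Type*) := ℕ → Profile Z

/-- The profile played in period `τ` when coalition `C` deviates to `ζ` (off `C`, players follow `x τ`). -/
def devProfile (x : RPath Z) (C : Finset N) (τ : ℕ) (ζ : Profile Z) : Profile Z :=
  fun i => if i ∈ C then ζ i else x τ i

/-- The spliced path `(x; ζ^C_τ; y)`: follow `x` before period `τ`, play the deviation profile at `τ`,
and follow `y` afterwards.  Periods are indexed from `0`. -/
def splice (x : RPath Z) (C : Finset N) (τ : ℕ) (ζ : Profile Z) (y : RPath Z) : RPath Z :=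
  fun t => if t < τ then x t else if t = τ then devProfile x C τ ζ else y (t - τ - 1)

/-- Discounted payoff `U_i(x) = (1-δ) ∑ δ^t u_i(x_t)`. -/
noncomputable def disc (u : N → Profile Z → ℝ) (δ : ℝ) (i : N) (x : RPath Z) : ℝ :=
  (1 - δ) * ∑' t : ℕ, δ ^ t * u i (x t)

/-- The coalitional enforceability operator `Ψ`. -/
def Psi (u : N → Profile Z → ℝ) (δ : ℝ) (Y : Set (RPath Z)) : Set (RPath Z) :=
  {x | ∀ C : Finset N, C.Nonempty → ∀ τ : ℕ, ∀ ζ : Profile Z,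
    ∃ p : N → RPath Z, (∀ i, p i ∈ Y) ∧
      ∃ i ∈ C, disc u δ i x ≥ disc u δ i (splice x C τ ζ (p i))}

/-- A history (position) is a finite list of past action profiles. -/
abbrev Hist (Z : N → Type*) := List (Profile Z)

/-- The history reached after `n` periods of following plan `f` from history `h`. -/
def planHist (f : Hist Z → Profile Z) (h : Hist Z) : ℕ → Hist Z
  | 0 => h
  | n + 1 => planHist f h n ++ [f (planHist f h n)]

/-- The continuation path prescribed by plan `f` after history `h`. -/
def planPath (f : Hist Z → Profile Z) (h : Hist Z) : RPath Z :=
  fun n => f (planHist f h n)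

/-- The position induced from `G` when coalition `C` deviates from path `x` in period `τ` via `ζ`. -/
def devHistory (G : Hist Z) (x : RPath Z) (C : Finset N) (τ : ℕ) (ζ : Profile Z) : Hist Z :=
  G ++ (List.ofFn fun t : Fin τ => x t) ++ [devProfile x C τ ζ]

/-- A Perfect Coalitional Equilibrium: after every history, every one-shot coalitional deviation
leaves some member of the deviating coalition no better off, given the plan's continuation. -/
def IsPCE (u : N → Profile Z → ℝ) (δ : ℝ) (f : Hist Z → Profile Z) : Prop :=
  ∀ h : Hist Z, ∀ C : Finset N, C.Nonempty → ∀ τ : ℕ, ∀ ζ : Profile Z,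
    ∃ i ∈ C, disc u δ i (planPath f h) ≥
      disc u δ i (splice (planPath f h) C τ ζ (planPath f (devHistory h (planPath f h) C τ ζ)))

/-- The set of Perfect Coalitional Equilibrium paths. -/
def PCEP (u : N → Profile Z → ℝ) (δ : ℝ) : Set (RPath Z) :=
  {x | ∃ f : Hist Z → Profile Z, IsPCE u δ f ∧ planPath f [] = x}

/-- Payoff at position `G`: `u_i(G)(x) = a_i(G) + δ^{|G|} U_i(x)`. -/
noncomputable def posPayoff (u : N → Profile Z → ℝ) (δ : ℝ) (i : N) (G : Hist Z)
    (x : RPath Z) : ℝ :=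
  (1 - δ) * (∑ t : Fin G.length, δ ^ (t : ℕ) * u i (G.get t)) + δ ^ G.length * disc u δ i x

/-- The conservative dominion of position `G` relative to the standard of behavior `σ`. -/
def CDOM (u : N → Profile Z → ℝ) (δ : ℝ) (σ : Hist Z → Set (RPath Z)) (G : Hist Z) :
    Set (RPath Z) :=
  {x | ∃ C : Finset N, C.Nonempty ∧ ∃ τ : ℕ, ∃ ζ : Profile Z,
    (σ (devHistory G x C τ ζ)).Nonempty ∧
    ∀ y ∈ σ (devHistory G x C τ ζ), ∀ i ∈ C,
      posPayoff u δ i (devHistory G x C τ ζ) y > posPayoff u δ i G x}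

/-- A standard of behavior is nondiscriminating if it assigns the same set to every position. -/
def Nondiscriminating (σ : Hist Z → Set (RPath Z)) : Prop := ∀ G H, σ G = σ H

/-- Conservative internal stability. -/
def ConsInternallyStable (u : N → Profile Z → ℝ) (δ : ℝ) (σ : Hist Z → Set (RPath Z)) : Prop :=
  ∀ G, σ G ∩ CDOM u δ σ G = ∅

/-- Conservative external stability. -/
def ConsExternallyStable (u : N → Profile Z → ℝ) (δ : ℝ) (σ : Hist Z → Set (RPath Z)) : Prop :=
  ∀ G, (σ G)ᶜ ⊆ CDOM u δ σ G

end Setup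

/-!
If `x[0]` is a PCE path, let `x[j]` minimise `U_j` over the compact set `closure PCEP`. Every
continuation of a PCE is again a PCE path, so replacing the equilibrium's continuation after a
deviation by `x[j]` can only lower `U_j`: every PCE path deters all one-shot deviations when `x[j]`
punishes `j`. These conditions are closed in the path, so they extend to `closure PCEP`, which
contains `x[0]` and all `x[j]`.

Conversely, the simple strategy profile that follows `x[k]` and, after a one-shot deviation to a
profile `a`, restarts on `x[j]` is a PCE. The plan observes only `a`, so `j` is chosen for the
coalition of players whose actions in `a` differ from the prescribed ones; it lies inside every
coalition able to produce `a`, and the deviation inequality for it transfers to each of them.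
-/
section Paths

variable {N : Type*} {Z : N → Type*}

def dropPath (t : ℕ) (x : RPath Z) : RPath Z := fun n => x (t + n)

lemma dropPath_zero (x : RPath Z) : dropPath 0 x = x := by
  funext n
  simp [dropPath]

lemma dropPath_dropPath (s t : ℕ) (x : RPath Z) :
    dropPath s (dropPath t x) = dropPath (t + s) x := by
  funext n
  simp [dropPath, add_assoc]

variable [DecidableEq N]

lemma splice_apply_of_lt {x : RPath Z} {C : Finset N} {τ s : ℕ} (ζ : Profile Z) (p : RPath Z)
    (hs : s < τ) : splice x C τ ζ p s = x s := if_pos hs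

lemma dropPath_splice_succ (x : RPath Z) (C : Finset N) (τ : ℕ) (ζ : Profile Z) (p : RPath Z) :
    dropPath (τ + 1) (splice x C τ ζ p) = p := by
  funext n
  simp only [dropPath, splice, if_neg (show ¬τ + 1 + n < τ by omega),
    if_neg (show τ + 1 + n ≠ τ by omega), show τ + 1 + n - τ - 1 = n by omega]

lemma dropPath_splice (y : RPath Z) (C : Finset N) (t τ : ℕ) (ζ : Profile Z) (p : RPath Z) :
    dropPath t (splice y C (t + τ) ζ p) = splice (dropPath t y) C τ ζ p := by
  funext n
  simp only [dropPath, splice, add_lt_add_iff_left, add_right_inj,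
    show t + n - (t + τ) - 1 = n - τ - 1 by omega]
  rfl

lemma splice_dropPath_self {x : RPath Z} {C : Finset N} {τ : ℕ} {ζ : Profile Z}
    (h : devProfile x C τ ζ = x τ) : splice x C τ ζ (dropPath (τ + 1) x) = x := by
  funext n
  simp only [splice, dropPath]
  split_ifs with h₁ h₂
  · rfl
  · rw [h, h₂]
  · congr 1; omega

lemma continuous_splice (C : Finset N) (τ : ℕ) (ζ : Profile Z) (p : RPath Z)
    [∀ i, TopologicalSpace (Z i)] : Continuous fun x : RPath Z => splice x C τ ζ p := by
  refine continuous_pi fun t => ?_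
  unfold splice devProfile
  split_ifs
  · exact continuous_apply t
  · exact continuous_pi fun i => by
      split_ifs
      exacts [continuous_const, (continuous_apply i).comp (continuous_apply τ)]
  · exact continuous_const

end Paths

section Discounting

variable {N : Type*} {Z : N → Type*} [∀ i, TopologicalSpace (Z i)] [∀ i, CompactSpace (Z i)]
  {u : N → Profile Z → ℝ} {δ : ℝ}

lemma exists_norm_pow_mul_le (hu : ∀ i, Continuous (u i)) (hδ0 : 0 ≤ δ) (i : N) :
    ∃ M : ℝ, ∀ (x : RPath Z) (t : ℕ), ‖δ ^ t * u i (x t)‖ ≤ δ ^ t * M := by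
  obtain ⟨M, hM⟩ := isCompact_univ.exists_bound_of_continuousOn (hu i).continuousOn
  refine ⟨M, fun x t => ?_⟩
  rw [norm_mul, norm_pow, Real.norm_of_nonneg hδ0]
  exact mul_le_mul_of_nonneg_left (hM _ (mem_univ _)) (pow_nonneg hδ0 t)

lemma summable_pow_mul (hu : ∀ i, Continuous (u i)) (hδ0 : 0 ≤ δ) (hδ1 : δ < 1) (i : N)
    (x : RPath Z) : Summable fun t => δ ^ t * u i (x t) := by
  obtain ⟨M, hM⟩ := exists_norm_pow_mul_le hu hδ0 i
  exact .of_norm_bounded ((summable_geometric_of_lt_one hδ0 hδ1).mul_right M) (hM x)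

lemma continuous_disc (hu : ∀ i, Continuous (u i)) (hδ0 : 0 ≤ δ) (hδ1 : δ < 1) (i : N) :
    Continuous (disc u δ i) := by
  obtain ⟨M, hM⟩ := exists_norm_pow_mul_le hu hδ0 i
  refine continuous_const.mul (continuous_tsum (fun t => ?_)
    ((summable_geometric_of_lt_one hδ0 hδ1).mul_right M) fun t x => hM x t)
  exact continuous_const.mul ((hu i).comp (continuous_apply t))

lemma disc_eq_sum_add_disc_dropPath (hu : ∀ i, Continuous (u i)) (hδ0 : 0 ≤ δ) (hδ1 : δ < 1)
    (i : N) (x : RPath Z) (t : ℕ) :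
    disc u δ i x = (1 - δ) * ∑ s ∈ Finset.range t, δ ^ s * u i (x s)
      + δ ^ t * disc u δ i (dropPath t x) := by
  have htail : ∑' s, δ ^ (s + t) * u i (x (s + t)) = δ ^ t * ∑' s, δ ^ s * u i (x (t + s)) := by
    rw [← tsum_mul_left]
    exact tsum_congr fun s => by rw [add_comm s t, pow_add]; ring
  rw [disc, disc, ← (summable_pow_mul hu hδ0 hδ1 i x).sum_add_tsum_nat_add t, htail]
  simp only [dropPath]
  ring

lemma disc_le_disc_iff_dropPath (hu : ∀ i, Continuous (u i)) (hδ0 : 0 < δ) (hδ1 : δ < 1)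
    (i : N) {x y : RPath Z} {t : ℕ} (h : ∀ s < t, x s = y s) :
    disc u δ i x ≤ disc u δ i y ↔ disc u δ i (dropPath t x) ≤ disc u δ i (dropPath t y) := by
  have hprefix :
      ∑ s ∈ Finset.range t, δ ^ s * u i (x s) = ∑ s ∈ Finset.range t, δ ^ s * u i (y s) :=
    Finset.sum_congr rfl fun s hs => by rw [h s (Finset.mem_range.1 hs)]
  rw [disc_eq_sum_add_disc_dropPath hu hδ0.le hδ1 i x t,
    disc_eq_sum_add_disc_dropPath hu hδ0.le hδ1 i y t, hprefix, add_le_add_iff_left,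
    mul_le_mul_iff_right₀ (pow_pos hδ0 t)]

end Discounting

section Plans

variable {N : Type*} {Z : N → Type*} {u : N → Profile Z → ℝ} {δ : ℝ}

lemma planHist_append (f : Hist Z → Profile Z) (D h : Hist Z) (n : ℕ) :
    planHist f (D ++ h) n = D ++ planHist (fun h' => f (D ++ h')) h n := by
  induction n with
  | zero => rfl
  | succ n ih => simp [planHist, ih]

lemma planPath_append (f : Hist Z → Profile Z) (D h : Hist Z) :
    planPath f (D ++ h) = planPath (fun h' => f (D ++ h')) h := by
  funext n
  rw [planPath, planPath, planHist_append]

lemma planHist_eq_append_ofFn (f : Hist Z → Profile Z) (h : Hist Z) (n : ℕ) :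
    planHist f h n = h ++ List.ofFn fun s : Fin n => planPath f h s := by
  induction n with
  | zero => simp [planHist]
  | succ n ih => rw [List.ofFn_succ', planHist, ih]; simp [planPath, ih]

variable [DecidableEq N]

lemma devHistory_append (D h : Hist Z) (x : RPath Z) (C : Finset N) (τ : ℕ) (ζ : Profile Z) :
    devHistory (D ++ h) x C τ ζ = D ++ devHistory h x C τ ζ := by
  simp [devHistory]

lemma devHistory_planPath (f : Hist Z → Profile Z) (h : Hist Z) (C : Finset N) (τ : ℕ)
    (ζ : Profile Z) :
    devHistory h (planPath f h) C τ ζ = planHist f h τ ++ [devProfile (planPath f h) C τ ζ] := by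
  rw [devHistory, planHist_eq_append_ofFn]

lemma IsPCE.comp_append {f : Hist Z → Profile Z} (hf : IsPCE u δ f) (D : Hist Z) :
    IsPCE u δ fun h => f (D ++ h) := by
  intro h C hC τ ζ
  simpa only [planPath_append, devHistory_append] using hf (D ++ h) C hC τ ζ

lemma IsPCE.planPath_mem_PCEP {f : Hist Z → Profile Z} (hf : IsPCE u δ f) (D : Hist Z) :
    planPath f D ∈ PCEP u δ :=
  ⟨_, hf.comp_append D, by rw [← planPath_append, List.append_nil]⟩

end Plans

section PenalCode

variable {N : Type*} [DecidableEq N] {Z : N → Type*} [∀ i, TopologicalSpace (Z i)]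
  [∀ i, CompactSpace (Z i)] {u : N → Profile Z → ℝ} {δ : ℝ}

def IsEnforcedBy (u : N → Profile Z → ℝ) (δ : ℝ) (xp : N → RPath Z) (x : RPath Z) : Prop :=
  ∀ τ : ℕ, ∀ C : Finset N, C.Nonempty → ∀ ζ : Profile Z,
    ∃ j ∈ C, disc u δ j x ≥ disc u δ j (splice x C τ ζ (xp j))

lemma disc_splice_le_disc_splice (hu : ∀ i, Continuous (u i)) (hδ0 : 0 < δ) (hδ1 : δ < 1)
    (i : N) (x : RPath Z) (C : Finset N) (τ : ℕ) (ζ : Profile Z) {p q : RPath Z}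
    (h : disc u δ i p ≤ disc u δ i q) :
    disc u δ i (splice x C τ ζ p) ≤ disc u δ i (splice x C τ ζ q) := by
  rwa [disc_le_disc_iff_dropPath hu hδ0 hδ1 i (t := τ + 1), dropPath_splice_succ,
    dropPath_splice_succ]
  intro s hs
  simp only [splice]
  split_ifs <;> first | rfl | omega

lemma disc_splice_dropPath_le_iff (hu : ∀ i, Continuous (u i)) (hδ0 : 0 < δ) (hδ1 : δ < 1)
    (i : N) (y : RPath Z) (C : Finset N) (t τ : ℕ) (ζ : Profile Z) (p : RPath Z) :
    disc u δ i (splice (dropPath t y) C τ ζ p) ≤ disc u δ i (dropPath t y) ↔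
      disc u δ i (splice y C (t + τ) ζ p) ≤ disc u δ i y := by
  rw [← dropPath_splice]
  exact (disc_le_disc_iff_dropPath hu hδ0 hδ1 i fun s hs => splice_apply_of_lt ζ p (by omega)).symm

lemma isEnforcedBy_of_mem_PCEP (hu : ∀ i, Continuous (u i)) (hδ0 : 0 < δ) (hδ1 : δ < 1)
    {xp : N → RPath Z} (hxp : ∀ j, ∀ y ∈ PCEP u δ, disc u δ j (xp j) ≤ disc u δ j y)
    {x : RPath Z} (hx : x ∈ PCEP u δ) : IsEnforcedBy u δ xp x := by
  obtain ⟨f, hf, rfl⟩ := hx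
  intro τ C hC ζ
  obtain ⟨j, hjC, hj⟩ := hf [] C hC τ ζ
  exact ⟨j, hjC, (disc_splice_le_disc_splice hu hδ0 hδ1 j _ C τ ζ
    (hxp j _ (hf.planPath_mem_PCEP _))).trans hj⟩

lemma isClosed_setOf_isEnforcedBy (hu : ∀ i, Continuous (u i)) (hδ0 : 0 ≤ δ) (hδ1 : δ < 1)
    (xp : N → RPath Z) : IsClosed {x | IsEnforcedBy u δ xp x} := by
  have hset : {x | IsEnforcedBy u δ xp x} = ⋂ (τ) (C : Finset N) (_ : C.Nonempty) (ζ),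
      ⋃ j ∈ C, {x | disc u δ j (splice x C τ ζ (xp j)) ≤ disc u δ j x} := by
    ext; simp [IsEnforcedBy]
  rw [hset]
  refine isClosed_iInter fun τ => isClosed_iInter fun C => isClosed_iInter fun _ =>
    isClosed_iInter fun ζ => isClosed_biUnion_finset fun j _ => isClosed_le ?_ ?_
  · exact (continuous_disc hu hδ0 hδ1 j).comp (continuous_splice C τ ζ (xp j))
  · exact continuous_disc hu hδ0 hδ1 j

theorem exists_isEnforcedBy_of_mem_PCEP (hu : ∀ i, Continuous (u i)) (hδ0 : 0 < δ)
    (hδ1 : δ < 1) {x0 : RPath Z} (hx0 : x0 ∈ PCEP u δ) :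
    ∃ xp : N → RPath Z, ∀ k : Option N, IsEnforcedBy u δ xp (k.elim x0 xp) := by
  set K := closure (PCEP u δ)
  have hmin : ∀ j, ∃ m ∈ K, IsMinOn (disc u δ j) K m := fun j =>
    isClosed_closure.isCompact.exists_isMinOn ⟨x0, subset_closure hx0⟩
      (continuous_disc hu hδ0.le hδ1 j).continuousOn
  choose xp hxpK hxp using hmin
  have hK : K ⊆ {x | IsEnforcedBy u δ xp x} :=
    closure_minimal (fun _ => isEnforcedBy_of_mem_PCEP hu hδ0 hδ1 fun j _ hy =>
      hxp j (subset_closure hy)) (isClosed_setOf_isEnforcedBy hu hδ0.le hδ1 xp)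
  refine ⟨xp, fun k => hK ?_⟩
  cases k with
  | none => exact subset_closure hx0
  | some j => exact hxpK j

end PenalCode

section Deviators

variable {N : Type*} [Fintype N] {Z : N → Type*}

open Classical in
noncomputable def deviators (a b : Profile Z) : Finset N := {i | a i ≠ b i}

lemma mem_deviators {a b : Profile Z} {i : N} : i ∈ deviators a b ↔ a i ≠ b i := by
  simp [deviators]

lemma deviators_nonempty {a b : Profile Z} (h : a ≠ b) : (deviators a b).Nonempty :=
  let ⟨i, hi⟩ := Function.ne_iff.1 h
  ⟨i, mem_deviators.2 hi⟩

variable [DecidableEq N]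

lemma deviators_devProfile_subset (x : RPath Z) (C : Finset N) (τ : ℕ) (ζ : Profile Z) :
    deviators (devProfile x C τ ζ) (x τ) ⊆ C := fun i hi => by
  by_contra hiC
  exact mem_deviators.1 hi (if_neg hiC)

lemma devProfile_deviators (x : RPath Z) (τ : ℕ) (a : Profile Z) :
    devProfile x (deviators a (x τ)) τ a = a := by
  funext i
  unfold devProfile
  split_ifs with hi
  · rfl
  · by_contra hne
    exact hi (mem_deviators.2 (Ne.symm hne))

lemma splice_deviators_devProfile (x : RPath Z) (C : Finset N) (τ : ℕ) (ζ : Profile Z)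
    (p : RPath Z) :
    splice x (deviators (devProfile x C τ ζ) (x τ)) τ (devProfile x C τ ζ) p =
      splice x C τ ζ p := by
  unfold splice
  rw [devProfile_deviators]

end Deviators

section SimplePlan

variable {N : Type*} {Z : N → Type*} (P : Option N → RPath Z)
  (J : ∀ k t (a : Profile Z), a ≠ P k t → N)

open Classical in
/-- The automaton of the simple strategy profile with penal code `P`: in state `(k, t)` the
prescribed profile is `P k t`; a deviation `a` from it starts the punishment path of `J k t a`. -/
noncomputable def simpleStep (s : Option N × ℕ) (a : Profile Z) : Option N × ℕ :=
  if h : a = P s.1 s.2 then (s.1, s.2 + 1) else (some (J s.1 s.2 a h), 0)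

noncomputable def simpleState (h : Hist Z) : Option N × ℕ :=
  h.foldl (simpleStep P J) (none, 0)

noncomputable def simplePlan (h : Hist Z) : Profile Z :=
  P (simpleState P J h).1 (simpleState P J h).2

lemma simpleState_append_singleton (h : Hist Z) (a : Profile Z) :
    simpleState P J (h ++ [a]) = simpleStep P J (simpleState P J h) a := by
  simp [simpleState]

lemma simpleStep_of_eq {k : Option N} {t : ℕ} {a : Profile Z} (ha : a = P k t) :
    simpleStep P J (k, t) a = (k, t + 1) := by
  simp [simpleStep, ha]

lemma simpleStep_of_ne {k : Option N} {t : ℕ} {a : Profile Z} (ha : a ≠ P k t) :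
    simpleStep P J (k, t) a = (some (J k t a ha), 0) := by
  simp [simpleStep, ha]

lemma simpleState_planHist (h : Hist Z) (n : ℕ) :
    simpleState P J (planHist (simplePlan P J) h n) =
      ((simpleState P J h).1, (simpleState P J h).2 + n) := by
  induction n with
  | zero => rfl
  | succ n ih =>
    rw [planHist, simpleState_append_singleton, simplePlan, ih, simpleStep_of_eq] <;> rfl

lemma planPath_simplePlan (h : Hist Z) :
    planPath (simplePlan P J) h = dropPath (simpleState P J h).2 (P (simpleState P J h).1) := by
  funext n
  rw [planPath, simplePlan, simpleState_planHist]
  rfl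

variable [Fintype N] [DecidableEq N] [∀ i, TopologicalSpace (Z i)] [∀ i, CompactSpace (Z i)]
  {u : N → Profile Z → ℝ} {δ : ℝ}

theorem isPCE_simplePlan (hu : ∀ i, Continuous (u i)) (hδ0 : 0 < δ) (hδ1 : δ < 1)
    (hJ : ∀ k t a (ha : a ≠ P k t), J k t a ha ∈ deviators a (P k t) ∧
      disc u δ (J k t a ha) (P k) ≥
        disc u δ (J k t a ha) (splice (P k) (deviators a (P k t)) t a (P (some (J k t a ha))))) :
    IsPCE u δ (simplePlan P J) := by
  intro h C hC τ ζ
  rcases hs : simpleState P J h with ⟨k, t⟩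
  rw [devHistory_planPath, planPath_simplePlan P J (_ ++ _), simpleState_append_singleton,
    simpleState_planHist, planPath_simplePlan P J h, hs]
  set x := dropPath t (P k)
  by_cases ha : devProfile x C τ ζ = P k (t + τ)
  · obtain ⟨i, hi⟩ := hC
    refine ⟨i, hi, le_of_eq ?_⟩
    rw [simpleStep_of_eq P J ha]
    dsimp only
    rw [add_assoc, ← dropPath_dropPath, splice_dropPath_self ha]
  · obtain ⟨hjD, hj⟩ := hJ k (t + τ) _ ha
    refine ⟨J k (t + τ) _ ha, deviators_devProfile_subset x C τ ζ hjD, ?_⟩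
    rw [simpleStep_of_ne P J ha]
    dsimp only
    rw [dropPath_zero, ← splice_deviators_devProfile, ge_iff_le,
      disc_splice_dropPath_le_iff hu hδ0 hδ1]
    exact hj

end SimplePlan

theorem optimal_penal_code_characterization_general {N : Type*} [Fintype N] [DecidableEq N] {Z : N → Type*}
    [∀ i, MetricSpace (Z i)] [∀ i, CompactSpace (Z i)]
    (u : N → Profile Z → ℝ) (δ : ℝ)
    (hu : ∀ i, Continuous (u i)) (hδ0 : 0 < δ) (hδ1 : δ < 1)
    (x0 : RPath Z) :
    x0 ∈ PCEP u δ ↔ ∃ xp : N → RPath Z,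
      ∀ k : Option N, ∀ τ : ℕ, ∀ C : Finset N, C.Nonempty → ∀ ζ : Profile Z,
        ∃ j ∈ C, disc u δ j (k.elim x0 xp) ≥
          disc u δ j (splice (k.elim x0 xp) C τ ζ (xp j)) := by
  refine ⟨exists_isEnforcedBy_of_mem_PCEP hu hδ0 hδ1, fun ⟨xp, hxp⟩ => ?_⟩
  set P : Option N → RPath Z := fun k => k.elim x0 xp
  have hpunish : ∀ k t (a : Profile Z), a ≠ P k t → ∃ j ∈ deviators a (P k t),
      disc u δ j (P k) ≥ disc u δ j (splice (P k) (deviators a (P k t)) t a (P (some j))) :=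
    fun k t a ha => hxp k t _ (deviators_nonempty ha) a
  choose J hJ using hpunish
  refine ⟨simplePlan P J, isPCE_simplePlan P J hu hδ0 hδ1 hJ, ?_⟩
  rw [planPath_simplePlan]
  exact dropPath_zero x0

theorem optimal_penal_code_characterization {N : Type*} [Fintype N] [DecidableEq N] {Z : N → Type*}
    [∀ i, MetricSpace (Z i)] [∀ i, CompactSpace (Z i)] [∀ i, Nonempty (Z i)]
    (u : N → Profile Z → ℝ) (δ : ℝ)
    (hu : ∀ i, Continuous (u i)) (hδ0 : 0 < δ) (hδ1 : δ < 1)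
    (x0 : RPath Z) :
    x0 ∈ PCEP u δ ↔ ∃ xp : N → RPath Z,
      ∀ k : Option N, ∀ τ : ℕ, ∀ C : Finset N, C.Nonempty → ∀ ζ : Profile Z,
        ∃ j ∈ C, disc u δ j (k.elim x0 xp) ≥
          disc u δ j (splice (k.elim x0 xp) C τ ζ (xp j)) :=
  optimal_penal_code_characterization_general u δ hu hδ0 hδ1 x0
end

section
/- For a nondiscriminating SB σ, a path x is conservatively dominated at G⁰ if and only if there exist a nonempty coalition C ⊆ N, a period τ ≥ 1, and ζ^C_τ ∈ Z^C such that, with z(j|σ) ∈ argmin{U_j : σ(G⁰)} (assumed to exist), U_j(x; ζ^C_τ; z(j|σ)) > U_j(x) for all j ∈ C. -/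
open Set

/-! Since `σ` is nondiscriminating, every position carries the same set `σ G⁰`, and the payoff at
a position is increasing in the continuation utility; so the condition "for all `y ∈ σ H`" holds
iff it holds for each member's worst path `z j`. At the root, the payoff at the deviation history
with continuation `y` is the discounted utility of the spliced path `(x; ζ^C_τ; y)`. -/

section Payoffs

variable {N : Type*} {Z : N → Type*} (u : N → Profile Z → ℝ) {δ : ℝ}

theorem summable_pow_mul_of_abs_le {f : ℕ → ℝ} {M : ℝ} (hf : ∀ t, |f t| ≤ M)
    (hδ0 : 0 ≤ δ) (hδ1 : δ < 1) : Summable fun t => δ ^ t * f t := by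
  refine Summable.of_norm_bounded ((summable_geometric_of_lt_one hδ0 hδ1).mul_right M) fun t => ?_
  rw [Real.norm_eq_abs, abs_mul, abs_pow, abs_of_nonneg hδ0]
  exact mul_le_mul_of_nonneg_left (hf t) (pow_nonneg hδ0 t)

theorem summable_pow_mul_of_compactSpace [∀ i, TopologicalSpace (Z i)] [∀ i, CompactSpace (Z i)]
    (hu : ∀ i, Continuous (u i)) (hδ0 : 0 ≤ δ) (hδ1 : δ < 1) (i : N) (w : RPath Z) :
    Summable fun t => δ ^ t * u i (w t) := by
  obtain ⟨M, hM⟩ := isCompact_univ.exists_bound_of_continuousOn (hu i).continuousOn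
  exact summable_pow_mul_of_abs_le (fun t => hM (w t) (mem_univ _)) hδ0 hδ1

theorem disc_eq_sum_add_pow_mul_disc_shift {i : N} {w : RPath Z}
    (hw : Summable fun t => δ ^ t * u i (w t)) (n : ℕ) :
    disc u δ i w = (1 - δ) * ∑ t ∈ Finset.range n, δ ^ t * u i (w t)
      + δ ^ n * disc u δ i (fun t => w (t + n)) := by
  have htail : ∑' t, δ ^ (t + n) * u i (w (t + n)) = δ ^ n * ∑' t, δ ^ t * u i (w (t + n)) := by
    rw [← tsum_mul_left]
    congr 1
    funext t
    ring
  rw [disc, disc, ← hw.sum_add_tsum_nat_add n, htail]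
  ring

theorem posPayoff_nil (i : N) (x : RPath Z) : posPayoff u δ i [] x = disc u δ i x := by
  simp [posPayoff]

theorem posPayoff_ofFn (i : N) {n : ℕ} (f : Fin n → Profile Z) (y : RPath Z) :
    posPayoff u δ i (List.ofFn f) y =
      (1 - δ) * ∑ t : Fin n, δ ^ (t : ℕ) * u i (f t) + δ ^ n * disc u δ i y := by
  rw [posPayoff, Fintype.sum_equiv (finCongr List.length_ofFn) _ (fun t => δ ^ (t : ℕ) * u i (f t))
    fun t => by rw [List.get_ofFn]; rfl, List.length_ofFn]

theorem posPayoff_le_posPayoff (hδ : 0 ≤ δ) (i : N) (G : Hist Z) {y y' : RPath Z}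
    (h : disc u δ i y ≤ disc u δ i y') : posPayoff u δ i G y ≤ posPayoff u δ i G y' := by
  unfold posPayoff
  gcongr

variable [DecidableEq N]

theorem splice_add_succ (x : RPath Z) (C : Finset N) (τ : ℕ) (ζ : Profile Z) (y : RPath Z)
    (t : ℕ) : splice x C τ ζ y (t + (τ + 1)) = y t := by
  simp only [splice, if_neg (by omega : ¬ t + (τ + 1) < τ), if_neg (by omega : t + (τ + 1) ≠ τ),
    show t + (τ + 1) - τ - 1 = t by omega]

theorem devHistory_nil_eq_ofFn (x : RPath Z) (C : Finset N) (τ : ℕ) (ζ : Profile Z)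
    (y : RPath Z) :
    devHistory [] x C τ ζ = List.ofFn fun t : Fin (τ + 1) => splice x C τ ζ y t := by
  rw [List.ofFn_succ_last, devHistory, List.nil_append]
  congr 1
  · congr 1
    funext t
    simp [splice]
  · simp [splice]

theorem posPayoff_devHistory_nil {i : N} (x : RPath Z) (C : Finset N) (τ : ℕ) (ζ : Profile Z)
    {y : RPath Z} (hs : Summable fun t => δ ^ t * u i (splice x C τ ζ y t)) :
    posPayoff u δ i (devHistory [] x C τ ζ) y = disc u δ i (splice x C τ ζ y) := by
  rw [devHistory_nil_eq_ofFn x C τ ζ y, posPayoff_ofFn,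
    disc_eq_sum_add_pow_mul_disc_shift u hs (τ + 1),
    Fin.sum_univ_eq_sum_range (fun t => δ ^ t * u i (splice x C τ ζ y t))]
  simp only [splice_add_succ]

end Payoffs

theorem mem_CDOM_iff_of_nondiscriminating {N : Type*} [DecidableEq N] {Z : N → Type*}
    {u : N → Profile Z → ℝ} {δ : ℝ} (hδ : 0 ≤ δ) {σ : Hist Z → Set (RPath Z)}
    (hnd : Nondiscriminating σ) {G : Hist Z} {z : N → RPath Z}
    (hz : ∀ i, z i ∈ σ G ∧ ∀ y ∈ σ G, disc u δ i (z i) ≤ disc u δ i y) (x : RPath Z) :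
    x ∈ CDOM u δ σ G ↔ ∃ C : Finset N, C.Nonempty ∧ ∃ τ : ℕ, ∃ ζ : Profile Z,
      ∀ j ∈ C, posPayoff u δ j (devHistory G x C τ ζ) (z j) > posPayoff u δ j G x := by
  simp only [CDOM, mem_ofPred_eq, hnd _ G]
  refine exists_congr fun C => and_congr_right fun ⟨j, hj⟩ => exists₂_congr fun τ ζ => ?_
  constructor
  · rintro ⟨-, hdom⟩ i hi
    exact hdom (z i) (hz i).1 i hi
  · intro hworst
    exact ⟨⟨z j, (hz j).1⟩, fun y hy i hi =>
      (hworst i hi).trans_le (posPayoff_le_posPayoff u hδ i _ ((hz i).2 y hy))⟩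

theorem cdom_positive_characterization_general {N : Type*} [DecidableEq N] {Z : N → Type*}
    [∀ i, MetricSpace (Z i)] [∀ i, CompactSpace (Z i)]
    (u : N → Profile Z → ℝ) (δ : ℝ)
    (hu : ∀ i, Continuous (u i)) (hδ0 : 0 < δ) (hδ1 : δ < 1)
    (σ : Hist Z → Set (RPath Z)) (hnd : Nondiscriminating σ)
    (z : N → RPath Z)
    (hz : ∀ i, z i ∈ σ ([] : Hist Z) ∧
      ∀ x ∈ σ ([] : Hist Z), disc u δ i (z i) ≤ disc u δ i x)
    (x : RPath Z) :
    x ∈ CDOM u δ σ ([] : Hist Z) ↔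
      ∃ C : Finset N, C.Nonempty ∧ ∃ τ : ℕ, ∃ ζ : Profile Z,
        ∀ j ∈ C, disc u δ j (splice x C τ ζ (z j)) > disc u δ j x := by
  simp only [mem_CDOM_iff_of_nondiscriminating hδ0.le hnd hz, posPayoff_nil,
    posPayoff_devHistory_nil u _ _ _ _ (summable_pow_mul_of_compactSpace u hu hδ0.le hδ1 _ _)]

theorem cdom_positive_characterization {N : Type*} [Fintype N] [DecidableEq N] {Z : N → Type*}
    [∀ i, MetricSpace (Z i)] [∀ i, CompactSpace (Z i)] [∀ i, Nonempty (Z i)]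
    (u : N → Profile Z → ℝ) (δ : ℝ)
    (hu : ∀ i, Continuous (u i)) (hδ0 : 0 < δ) (hδ1 : δ < 1)
    (σ : Hist Z → Set (RPath Z)) (hnd : Nondiscriminating σ)
    (hne : (σ ([] : Hist Z)).Nonempty)
    (z : N → RPath Z)
    (hz : ∀ i, z i ∈ σ ([] : Hist Z) ∧
      ∀ x ∈ σ ([] : Hist Z), disc u δ i (z i) ≤ disc u δ i x)
    (x : RPath Z) :
    x ∈ CDOM u δ σ ([] : Hist Z) ↔
      ∃ C : Finset N, C.Nonempty ∧ ∃ τ : ℕ, ∃ ζ : Profile Z,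
        ∀ j ∈ C, disc u δ j (splice x C τ ζ (z j)) > disc u δ j x :=
  cdom_positive_characterization_general u δ hu hδ0 hδ1 σ hnd z hz x
end
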